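/- The BMS action σ(α, f) = K_f⁻¹ · (α ∘ f) composed with the analytic translation curve η(t) corresponding to [[1,t],[0,1]], applied to the function h(ζ) = χ(ζ)/(1+Re(ζ)²) · θ(χ(ζ)Re(ζ)) and evaluated at ζ = 0, equals χ(t)·θ(χ(t)·t); in particular it equals θ(t) for |t| < 42. -/

import Mathlib

abbrev SL2C := Matrix.SpecialLinearGroup (Fin 2) ℂ

/-- The conformal factor `K(Λ,ζ) = (1+|ζ|²)/(|aζ+b|² + |cζ+d|²)` of a Möbius transformation
`Λ = [[a,b],[c,d]] ∈ SL(2,ℂ)` at `ζ ∈ ℂ`. -/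
noncomputable def Kfac (Λ : SL2C) (ζ : ℂ) : ℝ :=
  (1 + ‖ζ‖ ^ 2) /
    (‖(Λ : Matrix (Fin 2) (Fin 2) ℂ) 0 0 * ζ + (Λ : Matrix (Fin 2) (Fin 2) ℂ) 0 1‖ ^ 2 +
      ‖(Λ : Matrix (Fin 2) (Fin 2) ℂ) 1 0 * ζ + (Λ : Matrix (Fin 2) (Fin 2) ℂ) 1 1‖ ^ 2)

/-- The Möbius action of `Λ = [[a,b],[c,d]] ∈ SL(2,ℂ)` on `ℂ`: `Λ·ζ = (aζ+b)/(cζ+d)`. -/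
noncomputable def moebC (Λ : SL2C) (ζ : ℂ) : ℂ :=
  ((Λ : Matrix (Fin 2) (Fin 2) ℂ) 0 0 * ζ + (Λ : Matrix (Fin 2) (Fin 2) ℂ) 0 1) /
    ((Λ : Matrix (Fin 2) (Fin 2) ℂ) 1 0 * ζ + (Λ : Matrix (Fin 2) (Fin 2) ℂ) 1 1)

/-- The translation matrix `Λ_t = [[1,t],[0,1]] ∈ SL(2,ℂ)` for `t ∈ ℝ`. -/
noncomputable def transMat (t : ℝ) : SL2C :=
  ⟨!![1, (t : ℂ); 0, 1], by simp [Matrix.det_fin_two_of]⟩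

theorem moebC_transMat (t : ℝ) (ζ : ℂ) : moebC (transMat t) ζ = ζ + t := by
  simp [moebC, transMat]

theorem Kfac_transMat (t : ℝ) (ζ : ℂ) :
    Kfac (transMat t) ζ = (1 + ‖ζ‖ ^ 2) / (‖ζ + t‖ ^ 2 + 1) := by
  simp [Kfac, transMat]

theorem inv_Kfac_transMat_zero (t : ℝ) : (Kfac (transMat t) 0)⁻¹ = 1 + t ^ 2 := by
  simp [Kfac_transMat, Complex.norm_real, add_comm]

theorem inv_Kfac_transMat_zero_mul_moebC (t : ℝ) (α : ℂ → ℝ) :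
    (Kfac (transMat t) 0)⁻¹ * α (moebC (transMat t) 0) = (1 + t ^ 2) * α t := by
  rw [inv_Kfac_transMat_zero, moebC_transMat, zero_add]

theorem bms_action_along_translation_curve_general
    (θ : ℝ → ℝ) (χ : ℂ → ℝ)
    (hχ1 : ∀ ζ : ℂ, ‖ζ‖ ≤ 42 → χ ζ = 1)
    (h : ℂ → ℝ) (hh : ∀ ζ : ℂ, h ζ = χ ζ / (1 + ζ.re ^ 2) * θ (χ ζ * ζ.re)) :
    ∀ t : ℝ,
      ((Kfac (transMat t) 0)⁻¹ * h (moebC (transMat t) 0) = χ (t : ℂ) * θ (χ (t : ℂ) * t)) ∧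
      (|t| < 42 → (Kfac (transMat t) 0)⁻¹ * h (moebC (transMat t) 0) = θ t) := by
  intro t
  -- the conformal factor `1 + t²` cancels the weight `1 / (1 + Re ζ²)` built into `h`
  have hσ : (Kfac (transMat t) 0)⁻¹ * h (moebC (transMat t) 0) = χ t * θ (χ t * t) := by
    rw [inv_Kfac_transMat_zero_mul_moebC, hh, Complex.ofReal_re]
    field_simp
  refine ⟨hσ, fun ht => ?_⟩
  have hχt : χ t = 1 := hχ1 t (by rw [Complex.norm_real, Real.norm_eq_abs]; exact ht.le)
  rw [hσ, hχt, one_mul, one_mul]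

/-- The BMS action `σ(α, Λ)(ζ) = K(Λ,ζ)⁻¹ α(Λ·ζ)` applied to the function
`h(ζ) = χ(ζ)/(1+Re(ζ)²)·θ(χ(ζ)Re(ζ))` along the analytic translation curve
`t ↦ Λ_t = [[1,t],[0,1]]`, evaluated at `ζ = 0`, equals `χ(t)·θ(χ(t)·t)`;
in particular it equals `θ(t)` for `|t| < 42`. -/
theorem bms_action_along_translation_curve
    (θ : ℝ → ℝ) (χ : ℂ → ℝ)
    (hχ0 : ∀ ζ : ℂ, 43 < ‖ζ‖ → χ ζ = 0)
    (hχ1 : ∀ ζ : ℂ, ‖ζ‖ ≤ 42 → χ ζ = 1)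
    (h : ℂ → ℝ) (hh : ∀ ζ : ℂ, h ζ = χ ζ / (1 + ζ.re ^ 2) * θ (χ ζ * ζ.re)) :
    ∀ t : ℝ,
      ((Kfac (transMat t) 0)⁻¹ * h (moebC (transMat t) 0) = χ (t : ℂ) * θ (χ (t : ℂ) * t)) ∧
      (|t| < 42 → (Kfac (transMat t) 0)⁻¹ * h (moebC (transMat t) 0) = θ t) :=
  bms_action_along_translation_curve_general θ χ hχ1 h hh
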